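/- Let Ω ⊂ ℝ³ be a bounded domain and 0 < s < 1/2. Then extension by zero defines a bounded linear operator from H^s(Ω) to H^s(ℝ³), provided the boundary distance function d(x) := dist(x, ∂Ω) satisfies d(·)^{−2s} ∈ L^q(Ω) for some q > 1 with 2/(1 − 1/q) a valid Sobolev exponent for H^s(Ω). More precisely: if v ∈ H^s(Ω), ṽ denotes its extension by 0, and the double integral defining the Gagliardo seminorm of ṽ over ℝ³ is split, then the cross term is bounded by c(s) ‖v‖²_{L^r(Ω)} ‖d(·)^{−2s}‖_{L^{(r/2)'}(Ω)} where H^s(Ω) ↪ L^r(Ω) with r > 2. -/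

import Mathlib

/-!
For `x ∈ Ω` the complement `Ωᶜ` lies outside the ball of radius `d(x)` about `x`. Summing the
kernel `|x - y|^{-(N + t)}` (`N` the dimension) over the dyadic annuli
`2^k d(x) ≤ |x - y| < 2^{k+1} d(x)` gives a geometric series bounded by `C d(x)^{-t}` for every
`t > 0`. Integrating `v(x)^2` against this bound over `Ω` and applying Hölder's inequality with
exponents `r/2` and `(r/2)'` gives the claim.
-/

open MeasureTheory ENNReal Metric Set Module

theorem compl_ball_subset_iUnion_dyadic_annuli {X : Type*} [PseudoMetricSpace X] (x : X) {d : ℝ}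
    (hd : 0 < d) :
    (ball x d)ᶜ ⊆ ⋃ n : ℕ, closedBall x (2 * (2 ^ n * d)) \ ball x (2 ^ n * d) := by
  intro y hy
  have hyd : 1 ≤ dist y x / d := (one_le_div hd).2 (not_lt.1 hy)
  obtain ⟨n, hle, hlt⟩ := exists_nat_pow_near hyd one_lt_two
  rw [le_div_iff₀ hd] at hle
  rw [div_lt_iff₀ hd, pow_succ'] at hlt
  exact mem_iUnion.2 ⟨n, mem_closedBall.2 (by linarith), fun h => (mem_ball.1 h).not_ge hle⟩

theorem ENNReal.lintegral_mul_le_Lp_mul_Lq_of_two_lt {α : Type*} [MeasurableSpace α]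
    (ν : Measure α) {r : ℝ} (hr : 2 < r) {f g : α → ℝ≥0∞} (hf : AEMeasurable f ν)
    (hg : AEMeasurable g ν) :
    ∫⁻ a, f a * g a ∂ν ≤
      (∫⁻ a, f a ^ (r / 2) ∂ν) ^ (2 / r) * (∫⁻ a, g a ^ (r / (r - 2)) ∂ν) ^ ((r - 2) / r) := by
  have hpq : (r / 2).HolderConjugate (r / (r - 2)) := by
    refine ⟨?_, by positivity, div_pos (by positivity) (by linarith)⟩
    rw [inv_div, inv_div, inv_one, ← add_div, div_eq_one_iff_eq (by positivity)]
    ring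
  simpa only [one_div_div, Pi.mul_apply] using ENNReal.lintegral_mul_le_Lp_mul_Lq ν hpq hf hg

theorem lintegral_ofReal_sq_mul_rpow_le {α : Type*} [MeasurableSpace α] (ν : Measure α) {r : ℝ}
    (hr : 2 < r) {u w : α → ℝ} (hu : Measurable u) (hw : Measurable w) (hw0 : 0 ≤ w) (e : ℝ) :
    ∫⁻ a, ENNReal.ofReal (u a ^ 2) * ENNReal.ofReal (w a ^ e) ∂ν ≤
      (∫⁻ a, ENNReal.ofReal (|u a| ^ r) ∂ν) ^ (2 / r) *
        (∫⁻ a, ENNReal.ofReal (w a ^ (e * (r / (r - 2)))) ∂ν) ^ ((r - 2) / r) := by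
  have hu2 (a : α) : ENNReal.ofReal (u a ^ 2) ^ (r / 2) = ENNReal.ofReal (|u a| ^ r) := by
    rw [ENNReal.ofReal_rpow_of_nonneg (sq_nonneg _) (by positivity), ← sq_abs,
      ← Real.rpow_natCast, ← Real.rpow_mul (abs_nonneg _), Nat.cast_ofNat,
      mul_div_cancel₀ r two_ne_zero]
  have hwe (a : α) : ENNReal.ofReal (w a ^ e) ^ (r / (r - 2)) =
      ENNReal.ofReal (w a ^ (e * (r / (r - 2)))) := by
    rw [ENNReal.ofReal_rpow_of_nonneg (Real.rpow_nonneg (hw0 a) _)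
      (div_nonneg (by linarith) (by linarith)), ← Real.rpow_mul (hw0 a)]
  have hum : Measurable fun a => ENNReal.ofReal (u a ^ 2) := by fun_prop
  have hwm : Measurable fun a => ENNReal.ofReal (w a ^ e) := by fun_prop
  simpa only [hu2, hwe] using
    ENNReal.lintegral_mul_le_Lp_mul_Lq_of_two_lt ν hr hum.aemeasurable hwm.aemeasurable

section

variable {E : Type*} [NormedAddCommGroup E] [NormedSpace ℝ E] [FiniteDimensional ℝ E]

theorem IsOpen.infDist_frontier_eq_infDist_compl {Ω : Set E} (hΩ : IsOpen Ω) (hΩ_ne : Ω ≠ univ)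
    {x : E} (hx : x ∈ Ω) : infDist x (frontier Ω) = infDist x Ωᶜ := by
  obtain ⟨y, hy, hxy⟩ := exists_mem_frontier_infDist_compl_eq_dist hx hΩ_ne
  refine le_antisymm (hxy ▸ infDist_le_dist_of_mem hy) (infDist_le_infDist_of_subset ?_ ⟨y, hy⟩)
  exact fun z hz => (hΩ.frontier_eq ▸ hz).2

variable [MeasurableSpace E] [BorelSpace E] (μ : Measure E) [μ.IsAddHaarMeasure]

theorem setLIntegral_annulus_inv_edist_rpow_le (x : E) {ρ t : ℝ} (hρ : 0 < ρ) (ht : 0 ≤ t) :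
    ∫⁻ y in closedBall x (2 * ρ) \ ball x ρ, (edist x y ^ ((finrank ℝ E : ℝ) + t))⁻¹ ∂μ ≤
      2 ^ finrank ℝ E * μ (ball 0 1) * ENNReal.ofReal (ρ ^ (-t)) := by
  set k := finrank ℝ E
  have hkernel : ∀ y ∈ closedBall x (2 * ρ) \ ball x ρ,
      (edist x y ^ ((k : ℝ) + t))⁻¹ ≤ (ENNReal.ofReal ρ ^ ((k : ℝ) + t))⁻¹ := by
    intro y hy
    have hρy : ENNReal.ofReal ρ ≤ edist x y := by
      rw [edist_dist, dist_comm]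
      exact ENNReal.ofReal_le_ofReal (not_lt.1 hy.2)
    gcongr
  have hscale : (ρ ^ ((k : ℝ) + t))⁻¹ * (2 * ρ) ^ k = 2 ^ k * ρ ^ (-t) := by
    rw [Real.rpow_add hρ, Real.rpow_natCast, Real.rpow_neg hρ.le, mul_pow]
    have : 0 < ρ ^ t := Real.rpow_pos_of_pos hρ t
    field_simp
  calc ∫⁻ y in closedBall x (2 * ρ) \ ball x ρ, (edist x y ^ ((k : ℝ) + t))⁻¹ ∂μ
      ≤ ∫⁻ _ in closedBall x (2 * ρ) \ ball x ρ, (ENNReal.ofReal ρ ^ ((k : ℝ) + t))⁻¹ ∂μ :=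
        setLIntegral_mono measurable_const hkernel
    _ ≤ (ENNReal.ofReal ρ ^ ((k : ℝ) + t))⁻¹ * μ (closedBall x (2 * ρ)) := by
        rw [setLIntegral_const]
        gcongr
        exact sdiff_subset
    _ = 2 ^ k * μ (ball 0 1) * ENNReal.ofReal (ρ ^ (-t)) := by
        rw [Measure.addHaar_closedBall μ x (by positivity), ENNReal.ofReal_rpow_of_pos hρ,
          ← ENNReal.ofReal_inv_of_pos (by positivity), ← mul_assoc,
          ← ENNReal.ofReal_mul (by positivity), hscale, ENNReal.ofReal_mul (by positivity),
          ENNReal.ofReal_pow zero_le_two, ENNReal.ofReal_ofNat]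
        ring

theorem setLIntegral_compl_ball_inv_edist_rpow_le (x : E) {d t : ℝ} (hd : 0 < d) (ht : 0 ≤ t) :
    ∫⁻ y in (ball x d)ᶜ, (edist x y ^ ((finrank ℝ E : ℝ) + t))⁻¹ ∂μ ≤
      2 ^ finrank ℝ E * μ (ball 0 1) * (1 - ENNReal.ofReal (2 ^ (-t)))⁻¹ *
        ENNReal.ofReal (d ^ (-t)) := by
  have hdyadic (n : ℕ) : ENNReal.ofReal ((2 ^ n * d) ^ (-t)) =
      ENNReal.ofReal (d ^ (-t)) * ENNReal.ofReal (2 ^ (-t)) ^ n := by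
    rw [Real.mul_rpow (by positivity) hd.le, ← Real.rpow_natCast, ← Real.rpow_mul zero_le_two,
      mul_comm (n : ℝ), Real.rpow_mul zero_le_two, Real.rpow_natCast,
      ENNReal.ofReal_mul (by positivity), ENNReal.ofReal_pow (by positivity), mul_comm]
  calc ∫⁻ y in (ball x d)ᶜ, (edist x y ^ ((finrank ℝ E : ℝ) + t))⁻¹ ∂μ
      ≤ ∫⁻ y in ⋃ n : ℕ, closedBall x (2 * (2 ^ n * d)) \ ball x (2 ^ n * d),
          (edist x y ^ ((finrank ℝ E : ℝ) + t))⁻¹ ∂μ :=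
        lintegral_mono_set (compl_ball_subset_iUnion_dyadic_annuli x hd)
    _ ≤ ∑' n : ℕ, ∫⁻ y in closedBall x (2 * (2 ^ n * d)) \ ball x (2 ^ n * d),
          (edist x y ^ ((finrank ℝ E : ℝ) + t))⁻¹ ∂μ :=
        lintegral_iUnion_le _ _
    _ ≤ ∑' n : ℕ, 2 ^ finrank ℝ E * μ (ball 0 1) * ENNReal.ofReal ((2 ^ n * d) ^ (-t)) :=
        ENNReal.tsum_le_tsum fun n => setLIntegral_annulus_inv_edist_rpow_le μ x (by positivity) ht
    _ = _ := by
        simp_rw [hdyadic, ← mul_assoc]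
        rw [ENNReal.tsum_mul_left, ENNReal.tsum_geometric]
        ring

theorem setLIntegral_compl_inv_edist_rpow_le {Ω : Set E} (hΩ : IsOpen Ω) (hΩ_ne : Ω ≠ univ)
    {x : E} (hx : x ∈ Ω) {t : ℝ} (ht : 0 ≤ t) :
    ∫⁻ y in Ωᶜ, (edist x y ^ ((finrank ℝ E : ℝ) + t))⁻¹ ∂μ ≤
      2 ^ finrank ℝ E * μ (ball 0 1) * (1 - ENNReal.ofReal (2 ^ (-t)))⁻¹ *
        ENNReal.ofReal (infDist x (frontier Ω) ^ (-t)) := by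
  have hd : 0 < infDist x Ωᶜ :=
    (hΩ.isClosed_compl.notMem_iff_infDist_pos (nonempty_compl.2 hΩ_ne)).1 (not_not.2 hx)
  rw [hΩ.infDist_frontier_eq_infDist_compl hΩ_ne hx]
  exact (lintegral_mono_set (compl_subset_compl.2 ball_infDist_compl_subset)).trans
    (setLIntegral_compl_ball_inv_edist_rpow_le μ x hd ht)

theorem exists_setLIntegral_setLIntegral_compl_div_edist_rpow_le {t : ℝ} (ht : 0 < t) :
    ∃ c : ℝ, 0 < c ∧ ∀ Ω : Set E, IsOpen Ω → Ω ≠ univ → ∀ f : E → ℝ≥0∞,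
      ∫⁻ x in Ω, ∫⁻ y in Ωᶜ, f x / edist x y ^ ((finrank ℝ E : ℝ) + t) ∂μ ∂μ ≤
        ENNReal.ofReal c * ∫⁻ x in Ω, f x * ENNReal.ofReal (infDist x (frontier Ω) ^ (-t)) ∂μ := by
  set C := 2 ^ finrank ℝ E * μ (ball 0 1) * (1 - ENNReal.ofReal (2 ^ (-t)))⁻¹
  have hratio : ENNReal.ofReal (2 ^ (-t)) < 1 :=
    ENNReal.ofReal_lt_one.2 (Real.rpow_lt_one_of_one_lt_of_neg one_lt_two (neg_neg_of_pos ht))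
  have hC0 : C ≠ 0 := by
    simp [C, (measure_ball_pos μ (0 : E) one_pos).ne']
  have hCtop : C ≠ ⊤ :=
    mul_ne_top (mul_ne_top (pow_ne_top ofNat_ne_top) measure_ball_lt_top.ne)
      (inv_ne_top.2 (tsub_pos_of_lt hratio).ne')
  refine ⟨C.toReal, ENNReal.toReal_pos hC0 hCtop, fun Ω hΩ hΩ_ne f => ?_⟩
  rw [ENNReal.ofReal_toReal hCtop, ← lintegral_const_mul' _ _ hCtop]
  refine setLIntegral_mono' hΩ.measurableSet fun x hx => ?_
  simp_rw [div_eq_mul_inv]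
  rw [lintegral_const_mul _ (by fun_prop), mul_left_comm]
  gcongr
  exact setLIntegral_compl_inv_edist_rpow_le μ hΩ hΩ_ne hx ht.le

end

theorem stmt2_general (s : ℝ) (hs0 : 0 < s) :
    ∃ c : ℝ, 0 < c ∧
      ∀ (Ω : Set (EuclideanSpace ℝ (Fin 3))), IsOpen Ω → Bornology.IsBounded Ω →
      ∀ r : ℝ, 2 < r →
      ∀ v : EuclideanSpace ℝ (Fin 3) → ℝ, Measurable v →
      (∫⁻ x in Ω, ∫⁻ y in Ωᶜ, ENNReal.ofReal (v x ^ 2) / edist x y ^ (3 + 2 * s)) ≤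
        ENNReal.ofReal c *
          ((∫⁻ x in Ω, ENNReal.ofReal (|v x| ^ r)) ^ (2 / r)) *
          ((∫⁻ x in Ω,
              ENNReal.ofReal
                (Metric.infDist x (frontier Ω) ^ (-(2 * s) * (r / (r - 2))))) ^
            ((r - 2) / r)) := by
  obtain ⟨c, hc, hcross⟩ := exists_setLIntegral_setLIntegral_compl_div_edist_rpow_le
    (volume : Measure (EuclideanSpace ℝ (Fin 3))) (by positivity : 0 < 2 * s)
  refine ⟨c, hc, fun Ω hΩ hΩb r hr v hv => ?_⟩
  have hΩ_ne : Ω ≠ univ := fun h => NormedSpace.unbounded_univ ℝ _ (h ▸ hΩb)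
  have hdim : (3 : ℝ) = finrank ℝ (EuclideanSpace ℝ (Fin 3)) := by simp
  rw [hdim, mul_assoc]
  refine (hcross Ω hΩ hΩ_ne _).trans ?_
  gcongr
  exact lintegral_ofReal_sq_mul_rpow_le _ hr hv (by fun_prop) (fun _ => infDist_nonneg) _

/-- The cross term in the Gagliardo seminorm of the zero extension is controlled:
for `0 < s < 1/2` there is a constant `c(s)` such that for every bounded open
`Ω ⊂ ℝ³`, every `r > 2` and every measurable `v`,
`∫_Ω ∫_{Ωᶜ} |v x|² / |x-y|^{3+2s} ≤ c(s) ‖v‖²_{L^r(Ω)} ‖d(·)^{-2s}‖_{L^{(r/2)'}(Ω)}`,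
where `d` is the distance to `∂Ω`. -/
theorem stmt2 (s : ℝ) (hs0 : 0 < s) (hs : s < 1 / 2) :
    ∃ c : ℝ, 0 < c ∧
      ∀ (Ω : Set (EuclideanSpace ℝ (Fin 3))), IsOpen Ω → Bornology.IsBounded Ω →
      ∀ r : ℝ, 2 < r →
      ∀ v : EuclideanSpace ℝ (Fin 3) → ℝ, Measurable v →
      (∫⁻ x in Ω, ∫⁻ y in Ωᶜ, ENNReal.ofReal (v x ^ 2) / edist x y ^ (3 + 2 * s)) ≤
        ENNReal.ofReal c *
          ((∫⁻ x in Ω, ENNReal.ofReal (|v x| ^ r)) ^ (2 / r)) *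
          ((∫⁻ x in Ω,
              ENNReal.ofReal
                (Metric.infDist x (frontier Ω) ^ (-(2 * s) * (r / (r - 2))))) ^
            ((r - 2) / r)) :=
  stmt2_general s hs0
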